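/- arXiv:2203.11929 — 3 statements merged into one kernel-verified Lean document; each statement's English description precedes it below -/
import Mathlib

section
/- Let (F,Ω,⋆) be a stratified fusion system on a group S and let 1 denote the trivial subgroup of S. Then 1⋆ is normal in F; in particular, 1⋆ ≤ Soc(F). -/
/-- `F f X Y` asserts that the function `f : S → S` (through its restriction to `X`)
is an `F`-homomorphism from the subgroup `X` to the subgroup `Y`. -/
abbrev HomPred (S : Type*) [Group S] := (S → S) → Subgroup S → Subgroup S → Prop

/-- A fusion system, with hom-sets given by `F · X Y`, on the subgroup `T`
of the ambient group `S`.  Morphisms are represented by functions `S → S`,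
two functions agreeing on `X` representing the same morphism `X → Y`. -/
structure IsFusionSystem {S : Type*} [Group S] (T : Subgroup S) (F : HomPred S) : Prop where
  le_base : ∀ f X Y, F f X Y → X ≤ T ∧ Y ≤ T
  mapsTo : ∀ f X Y, F f X Y → Set.MapsTo f (X : Set S) (Y : Set S)
  injOn : ∀ f X Y, F f X Y → Set.InjOn f (X : Set S)
  map_mul' : ∀ f X Y, F f X Y → ∀ x ∈ X, ∀ y ∈ X, f (x * y) = f x * f y
  of_eqOn : ∀ f g X Y, F f X Y → Set.EqOn g f (X : Set S) → F g X Y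
  conj_mem : ∀ g ∈ T, ∀ X Y : Subgroup S, X ≤ T → Y ≤ T →
    (∀ x ∈ X, g⁻¹ * x * g ∈ Y) → F (fun x => g⁻¹ * x * g) X Y
  comp_mem : ∀ f g X Y Z, F f X Y → F g Y Z → F (g ∘ f) X Z
  restrict_mem : ∀ f X Y X₀ Y₀, F f X Y → X₀ ≤ X → Y₀ ≤ Y →
    Set.MapsTo f (X₀ : Set S) (Y₀ : Set S) → F f X₀ Y₀
  corestrict_mem : ∀ f X Y, F f X Y → F f X (Subgroup.closure (f '' (X : Set S)))
  inv_mem : ∀ f X Y, F f X Y →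
    ∃ g, F g (Subgroup.closure (f '' (X : Set S))) X ∧ ∀ x ∈ X, g (f x) = x

variable {S : Type*} [Group S]

/-- `f` is an `F`-isomorphism from `X` onto `Y`. -/
def IsFIso (F : HomPred S) (f : S → S) (X Y : Subgroup S) : Prop :=
  F f X Y ∧ f '' (X : Set S) = (Y : Set S)

/-- `X^F`, the set of `F`-conjugates of `X`. -/
def FConj (F : HomPred S) (X : Subgroup S) : Set (Subgroup S) :=
  {Y | ∃ f, IsFIso F f X Y}

/-- `N` is normal in the fusion system `F` on the base subgroup `T`:
`N` is normal in `T` and every `F`-isomorphism `X → Y` extends to an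
`F`-isomorphism `XN → YN` mapping `N` onto `N`. -/
def NormalInF (T : Subgroup S) (F : HomPred S) (N : Subgroup S) : Prop :=
  N ≤ T ∧ (∀ g ∈ T, ∀ n ∈ N, g⁻¹ * n * g ∈ N) ∧
    ∀ f X Y, IsFIso F f X Y →
      ∃ g, IsFIso F g (X ⊔ N) (Y ⊔ N) ∧ Set.EqOn g f (X : Set S) ∧
        g '' (N : Set S) = (N : Set S)

/-- The supremum of the lengths of strictly increasing chains in `Ω`
terminating in `A`. -/
noncomputable def dimEnd (Ω : Set (Subgroup S)) (A : Subgroup S) : ℕ :=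
  sSup {n | ∃ c : Fin (n + 1) → Subgroup S,
    StrictMono c ∧ (∀ i, c i ∈ Ω) ∧ c (Fin.last n) = A}

/-- The supremum of the lengths of strictly increasing chains in `Ω`. -/
noncomputable def dimOmega (Ω : Set (Subgroup S)) : ℕ :=
  sSup {n | ∃ c : Fin (n + 1) → Subgroup S, StrictMono c ∧ ∀ i, c i ∈ Ω}

/-- `(Ω, star)` is a stratification on the fusion system `F` on base `T`. -/
structure IsStratification (T : Subgroup S) (F : HomPred S)
    (Ω : Set (Subgroup S)) (star : Subgroup S → Subgroup S) : Prop where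
  omega_le : ∀ A ∈ Ω, A ≤ T
  star_mem : ∀ X : Subgroup S, X ≤ T → star X ∈ Ω
  star_fix : ∀ A ∈ Ω, star A = A
  star_mono : ∀ X Y : Subgroup S, X ≤ T → Y ≤ T → X ≤ Y → star X ≤ star Y
  finDim : ∃ N : ℕ, ∀ n : ℕ,
    (∃ c : Fin (n + 1) → Subgroup S, StrictMono c ∧ ∀ i, c i ∈ Ω) → n ≤ N
  conj_invariant : ∀ A ∈ Ω, ∀ f Y, IsFIso F f A Y → Y ∈ Ω
  le_star : ∀ X : Subgroup S, X ≤ T → X ≤ star X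
  extend_star : ∀ f X Y, IsFIso F f X Y →
    ∃ g, IsFIso F g (star X) (star Y) ∧ Set.EqOn g f (X : Set S)

/-- `dim_Ω(X)`, the supremum of the lengths of strictly increasing chains
in `Ω` terminating in `X⋆`. -/
noncomputable def dimStar (Ω : Set (Subgroup S)) (star : Subgroup S → Subgroup S)
    (X : Subgroup S) : ℕ :=
  dimEnd Ω (star X)

/-- `V` is fully normalized in the stratified fusion system `(F, Ω, star)` on base `T`. -/
def FullyNormalizedIn (T : Subgroup S) (F : HomPred S) (Ω : Set (Subgroup S))
    (star : Subgroup S → Subgroup S) (V : Subgroup S) : Prop :=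
  ∀ U ∈ FConj F V, dimStar Ω star (Subgroup.normalizer (U : Set S) ⊓ T) ≤ dimStar Ω star (Subgroup.normalizer (V : Set S) ⊓ T)

/-- `V` is fully centralized in the stratified fusion system `(F, Ω, star)` on base `T`. -/
def FullyCentralizedIn (T : Subgroup S) (F : HomPred S) (Ω : Set (Subgroup S))
    (star : Subgroup S → Subgroup S) (V : Subgroup S) : Prop :=
  ∀ U ∈ FConj F V,
    dimStar Ω star ((Subgroup.centralizer (U : Set S) ⊓ T) ⊔ U) ≤
      dimStar Ω star ((Subgroup.centralizer (V : Set S) ⊓ T) ⊔ V)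

/-- `Γ` is an `F`-closed set of subgroups. -/
def FClosed (F : HomPred S) (Γ : Set (Subgroup S)) : Prop :=
  Γ.Nonempty ∧ (∀ X ∈ Γ, ∀ Y ∈ FConj F X, Y ∈ Γ) ∧
    ∀ X ∈ Γ, ∀ Y : Subgroup S, X ≤ Y → Y ∈ Γ

/-- `Y` is normalizer-inductive in the fusion system `F` on base `T`. -/
def NormalizerInductive (T : Subgroup S) (F : HomPred S) (Y : Subgroup S) : Prop :=
  ∀ X ∈ FConj F Y, ∃ φ, F φ (Subgroup.normalizer (X : Set S) ⊓ T) (Subgroup.normalizer (Y : Set S) ⊓ T) ∧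
    φ '' (X : Set S) = (Y : Set S)

/-- `Y` is centralizer-inductive in the fusion system `F` on base `T`. -/
def CentralizerInductive (T : Subgroup S) (F : HomPred S) (Y : Subgroup S) : Prop :=
  ∀ X ∈ FConj F Y, ∃ ψ,
    F ψ ((Subgroup.centralizer (X : Set S) ⊓ T) ⊔ X)
        ((Subgroup.centralizer (Y : Set S) ⊓ T) ⊔ Y) ∧
    ψ '' (X : Set S) = (Y : Set S)

/-- `F` is `Γ`-inductive. -/
def GammaInductive (T : Subgroup S) (F : HomPred S) (Γ : Set (Subgroup S)) : Prop :=
  ∀ X ∈ Γ, ∃ Y ∈ FConj F X, NormalizerInductive T F Y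

/-- `F` is inductive (i.e. `Sub(T)`-inductive). -/
def InductiveFS (T : Subgroup S) (F : HomPred S) : Prop :=
  ∀ X : Subgroup S, X ≤ T → ∃ Y ∈ FConj F X, NormalizerInductive T F Y

/-- `⟨Φ⟩_T`: the smallest fusion system on `T` all of whose homomorphisms are
`Famb`-homomorphisms and whose hom-sets contain `Φ`. -/
def GenFS (T : Subgroup S) (Famb : HomPred S) (Φ : HomPred S) : HomPred S :=
  fun f X Y => ∀ E : HomPred S, IsFusionSystem T E →
    (∀ g A B, E g A B → Famb g A B) → (∀ g A B, Φ g A B → E g A B) → E f X Y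

/-- The generating set `Φ` for `N_F(V)`: `F`-isomorphisms between subgroups of
`N_S(V)` extending to `F`-isomorphisms `XV → YV` restricting to an automorphism of `V`. -/
def NPhi (F : HomPred S) (V : Subgroup S) : HomPred S :=
  fun f X Y => X ≤ Subgroup.normalizer (V : Set S) ∧ Y ≤ Subgroup.normalizer (V : Set S) ∧ IsFIso F f X Y ∧
    ∃ g, IsFIso F g (X ⊔ V) (Y ⊔ V) ∧ Set.EqOn g f (X : Set S) ∧
      g '' (V : Set S) = (V : Set S)

/-- The fusion system `N_F(V)` on `N_S(V)`. -/
def NFus (F : HomPred S) (V : Subgroup S) : HomPred S :=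
  GenFS (Subgroup.normalizer (V : Set S)) F (NPhi F V)

/-- The generating set `Ψ` for `C_F(V)`: `F`-isomorphisms between subgroups of
`C_S(V)` extending to `F`-isomorphisms `XV → YV` restricting to the identity on `V`. -/
def CPsi (F : HomPred S) (V : Subgroup S) : HomPred S :=
  fun f X Y => X ≤ Subgroup.centralizer (V : Set S) ∧
    Y ≤ Subgroup.centralizer (V : Set S) ∧ IsFIso F f X Y ∧
    ∃ g, IsFIso F g (X ⊔ V) (Y ⊔ V) ∧ Set.EqOn g f (X : Set S) ∧ ∀ v ∈ V, g v = v

/-- The fusion system `C_F(V)` on `C_S(V)`. -/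
def CFus (F : HomPred S) (V : Subgroup S) : HomPred S :=
  GenFS (Subgroup.centralizer (V : Set S)) F (CPsi F V)

/-- `X ↦ X• = (VX)⋆ ⊓ N_S(V)`. -/
def bulletStar (star : Subgroup S → Subgroup S) (V : Subgroup S) :
    Subgroup S → Subgroup S :=
  fun X => star (V ⊔ X) ⊓ Subgroup.normalizer (V : Set S)

/-- `N_Ω(V) = {X• : X ≤ N_S(V)}`. -/
def bulletOmega (star : Subgroup S → Subgroup S) (V : Subgroup S) : Set (Subgroup S) :=
  {A | ∃ X : Subgroup S, X ≤ Subgroup.normalizer (V : Set S) ∧ A = bulletStar star V X}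

/-- `A ↦ A° = (VA)⋆ ⊓ C_S(V)`. -/
def circStar (star : Subgroup S → Subgroup S) (V : Subgroup S) :
    Subgroup S → Subgroup S :=
  fun A => star (V ⊔ A) ⊓ Subgroup.centralizer (V : Set S)

/-- `C_Ω(V) = {A° : A ≤ C_S(V)}`. -/
def circOmega (star : Subgroup S → Subgroup S) (V : Subgroup S) : Set (Subgroup S) :=
  {A | ∃ X : Subgroup S, X ≤ Subgroup.centralizer (V : Set S) ∧ A = circStar star V X}

/-- `T` is strongly closed in `F`. -/
def StronglyClosedF (F : HomPred S) (T : Subgroup S) : Prop :=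
  ∀ X : Subgroup S, X ≤ T → ∀ Y ∈ FConj F X, Y ≤ T


/-! Since `⋆` is monotone and fixes `Ω`, `1⋆` is the least element of `Ω`. As `Ω` is closed under
`F`-conjugacy, every `F`-image of `1⋆` contains `1⋆`; applying this also to the inverse of an
`F`-isomorphism whose domain and codomain both contain `1⋆` shows that it maps `1⋆` onto itself.
Conjugations by elements of `S` are such isomorphisms, and by (St3) every `F`-isomorphism
`X → Y` extends to one `X⋆ → Y⋆`, whose restriction to `X 1⋆` is the required extension. -/

section FusionSystem

variable {T : Subgroup S} {F : HomPred S}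

namespace IsFusionSystem

def monoidHom (hF : IsFusionSystem T F) {ψ : S → S} {X Y : Subgroup S} (hψ : F ψ X Y) :
    X →* S :=
  MonoidHom.mk' (fun x => ψ x) fun a b => hF.map_mul' ψ X Y hψ a a.2 b b.2

lemma coe_map_monoidHom (hF : IsFusionSystem T F) {ψ : S → S} {X Y A : Subgroup S}
    (hψ : F ψ X Y) (hA : A ≤ X) :
    ((A.subgroupOf X).map (hF.monoidHom hψ) : Set S) = ψ '' A := by
  ext y
  simp only [Subgroup.coe_map, Set.mem_image, SetLike.mem_coe, Subgroup.mem_subgroupOf]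
  constructor
  · rintro ⟨x, hx, rfl⟩
    exact ⟨x, hx, rfl⟩
  · rintro ⟨x, hx, rfl⟩
    exact ⟨⟨x, hA hx⟩, hx, rfl⟩

lemma exists_isFIso_image (hF : IsFusionSystem T F) {ψ : S → S} {X Y A : Subgroup S}
    (hψ : F ψ X Y) (hA : A ≤ X) : ∃ P : Subgroup S, IsFIso F ψ A P := by
  refine ⟨(A.subgroupOf X).map (hF.monoidHom hψ), ?_, hF.coe_map_monoidHom hψ hA ▸ rfl⟩
  refine hF.restrict_mem ψ X Y A _ hψ hA ?_ ?_
  · rw [← SetLike.coe_subset_coe, hF.coe_map_monoidHom hψ hA]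
    exact Set.image_subset_iff.mpr fun a ha => hF.mapsTo ψ X Y hψ (hA ha)
  · rw [hF.coe_map_monoidHom hψ hA]
    exact Set.mapsTo_image ψ _

lemma image_sup (hF : IsFusionSystem T F) {ψ : S → S} {X Y A B P Q : Subgroup S}
    (hψ : F ψ X Y) (hA : A ≤ X) (hB : B ≤ X)
    (hP : ψ '' (A : Set S) = P) (hQ : ψ '' (B : Set S) = Q) :
    ψ '' ((A ⊔ B : Subgroup S) : Set S) = (P ⊔ Q : Subgroup S) := by
  have hPeq : (A.subgroupOf X).map (hF.monoidHom hψ) = P :=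
    SetLike.coe_injective ((hF.coe_map_monoidHom hψ hA).trans hP)
  have hQeq : (B.subgroupOf X).map (hF.monoidHom hψ) = Q :=
    SetLike.coe_injective ((hF.coe_map_monoidHom hψ hB).trans hQ)
  rw [← hF.coe_map_monoidHom hψ (sup_le hA hB), Subgroup.subgroupOf_sup hA hB,
    Subgroup.map_sup, hPeq, hQeq]

lemma isFIso_conj (hF : IsFusionSystem T F) {g : S} (hg : g ∈ T) :
    IsFIso F (fun x => g⁻¹ * x * g) T T := by
  refine ⟨hF.conj_mem g hg T T le_rfl le_rfl fun x hx => ?_, ?_⟩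
  · exact T.mul_mem (T.mul_mem (T.inv_mem hg) hx) hg
  · refine Set.Subset.antisymm (Set.image_subset_iff.mpr fun x hx => ?_) fun y hy => ?_
    · exact T.mul_mem (T.mul_mem (T.inv_mem hg) hx) hg
    · exact ⟨g * y * g⁻¹, T.mul_mem (T.mul_mem hg hy) (T.inv_mem hg), by group⟩

end IsFusionSystem

namespace IsStratification

variable {Ω : Set (Subgroup S)} {star : Subgroup S → Subgroup S}

lemma star_bot_le (hΩ : IsStratification T F Ω star) {A : Subgroup S} (hA : A ∈ Ω) :
    star ⊥ ≤ A :=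
  hΩ.star_fix A hA ▸ hΩ.star_mono ⊥ A bot_le (hΩ.omega_le A hA) bot_le

lemma star_bot_subset_image (hF : IsFusionSystem T F) (hΩ : IsStratification T F Ω star)
    {ψ : S → S} {X Y : Subgroup S} (hψ : F ψ X Y) (hX : star ⊥ ≤ X) :
    (star ⊥ : Set S) ⊆ ψ '' (star ⊥ : Subgroup S) := by
  obtain ⟨P, hP⟩ := hF.exists_isFIso_image hψ hX
  rw [hP.2]
  exact hΩ.star_bot_le (hΩ.conj_invariant _ (hΩ.star_mem ⊥ bot_le) ψ P hP)

lemma image_star_bot (hF : IsFusionSystem T F) (hΩ : IsStratification T F Ω star)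
    {ψ : S → S} {X Y : Subgroup S} (hψ : IsFIso F ψ X Y) (hX : star ⊥ ≤ X) (hY : star ⊥ ≤ Y) :
    ψ '' (star ⊥ : Subgroup S) = (star ⊥ : Set S) := by
  obtain ⟨γ, hγ, hγψ⟩ := hF.inv_mem ψ X Y hψ.1
  rw [hψ.2, Subgroup.closure_eq] at hγ
  refine Set.Subset.antisymm (Set.image_subset_iff.mpr fun n hn => ?_)
    (hΩ.star_bot_subset_image hF hψ.1 hX)
  obtain ⟨m, hm, rfl⟩ := hΩ.star_bot_subset_image hF hγ hY hn
  obtain ⟨x, hx, rfl⟩ : (m : S) ∈ ψ '' (X : Set S) := hψ.2 ▸ hY hm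
  rwa [Set.mem_preimage, hγψ x hx]

theorem normalInF_star_bot (hF : IsFusionSystem T F) (hΩ : IsStratification T F Ω star) :
    NormalInF T F (star ⊥) := by
  have hNT : star ⊥ ≤ T := hΩ.omega_le _ (hΩ.star_mem ⊥ bot_le)
  refine ⟨hNT, fun g hg n hn => ?_, fun f X Y hf => ?_⟩
  · exact (hΩ.image_star_bot hF (hF.isFIso_conj hg) hNT hNT).subset ⟨n, hn, rfl⟩
  obtain ⟨hXT, hYT⟩ := hF.le_base f X Y hf.1
  obtain ⟨ψ, hψ, hψf⟩ := hΩ.extend_star f X Y hf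
  have hX := hΩ.le_star X hXT
  have hY := hΩ.le_star Y hYT
  have hNX := hΩ.star_bot_le (hΩ.star_mem X hXT)
  have hNY := hΩ.star_bot_le (hΩ.star_mem Y hYT)
  have hψN := hΩ.image_star_bot hF hψ hNX hNY
  have hψsup := hF.image_sup hψ.1 hX hNX ((Set.image_congr hψf).trans hf.2) hψN
  refine ⟨ψ, ⟨hF.restrict_mem ψ _ _ _ _ hψ.1 (sup_le hX hNX) (sup_le hY hNY) ?_, hψsup⟩,
    hψf, hψN⟩
  exact hψsup ▸ Set.mapsTo_image ψ _

end IsStratification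

end FusionSystem

/-- Lemma 2.5. `1⋆` is normal in `F`; in particular `1⋆ ≤ Soc(F)`. -/
theorem star_bot_normalInF
    {S : Type*} [Group S] (F : HomPred S)
    (Ω : Set (Subgroup S)) (star : Subgroup S → Subgroup S)
    (hF : IsFusionSystem ⊤ F) (hΩ : IsStratification ⊤ F Ω star) :
    NormalInF ⊤ F (star ⊥) ∧
      ∀ M : Subgroup S, IsGreatest {N : Subgroup S | NormalInF ⊤ F N} M → star ⊥ ≤ M :=
  ⟨hΩ.normalInF_star_bot hF, fun _ hM => hM.2 (hΩ.normalInF_star_bot hF)⟩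
end

section
/- Let (F,Ω,⋆) be a stratified fusion system on a group S, let V ≤ S, and set D = C_S(V). For each subgroup A ≤ D set A° = (VA)⋆ ∩ D (here VA is a subgroup since A centralizes V), and set C_Ω(V) = {A° : A ≤ D}. Then: (a) (C_Ω(V),°) is a stratification on the fusion system C_F(V) on D; (b) the map A ↦ (VA)⋆ is an injective homomorphism of posets C_Ω(V) → Ω; (c) if the maximal length dim(C_Ω(V)) of a strictly increasing chain in C_Ω(V) equals dim(Ω), then Z(V) ≤ 1⋆ and (VD)⋆ = S, where Z(V) is the center of V and 1 denotes the trivial subgroup of S. -/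
variable {S : Type*} [Group S]

/-!
Morphisms of `C_F(V)` are controlled from above by the maps `f : X → Y` (`X, Y ≤ C_S(V)`) that
extend to an `F`-homomorphism `VX → VY` fixing `V` pointwise, since these already form a fusion
system on `C_S(V)`. Such an extension extends further to an `F`-isomorphism `(VX)⋆ → (VY)⋆`,
which still fixes `V` and hence maps `(VX)⋆ ∩ C_S(V)` onto `(VY)⋆ ∩ C_S(V)`; this yields the
axioms (St1) and (St3) for `°`. Since `(V A°)⋆ = (VA)⋆`, the map `A ↦ (VA)⋆` is injective on
`C_Ω(V)`, so it carries chains of `C_Ω(V)` to chains of `Ω`. If the dimensions agree, the image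
of a longest chain of `C_Ω(V)` is a longest chain of `Ω`, so it starts at `1⋆` and ends at `S`.
-/

open Subgroup

namespace IsFusionSystem

variable {T : Subgroup S} {F : HomPred S} {f : S → S} {X Y : Subgroup S}

lemma map_one (hF : IsFusionSystem T F) (hf : F f X Y) : f 1 = 1 := by
  have h := hF.map_mul' f X Y hf 1 X.one_mem 1 X.one_mem
  rw [mul_one] at h
  exact left_eq_mul.mp h

lemma map_inv (hF : IsFusionSystem T F) (hf : F f X Y) {x : S} (hx : x ∈ X) :
    f x⁻¹ = (f x)⁻¹ := by
  have h := hF.map_mul' f X Y hf x⁻¹ (X.inv_mem hx) x hx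
  rw [inv_mul_cancel, hF.map_one hf] at h
  exact eq_inv_of_mul_eq_one_left h.symm

lemma coe_closure_image (hF : IsFusionSystem T F) (hf : F f X Y) {P : Subgroup S}
    (hP : P ≤ X) : (closure (f '' P) : Set S) = f '' P := by
  let H : Subgroup S :=
    { carrier := f '' P
      one_mem' := ⟨1, P.one_mem, hF.map_one hf⟩
      mul_mem' := by
        rintro _ _ ⟨p, hp, rfl⟩ ⟨q, hq, rfl⟩
        exact ⟨p * q, P.mul_mem hp hq, hF.map_mul' f X Y hf p (hP hp) q (hP hq)⟩
      inv_mem' := by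
        rintro _ ⟨p, hp, rfl⟩
        exact ⟨p⁻¹, P.inv_mem hp, hF.map_inv hf (hP hp)⟩ }
  exact congrArg SetLike.coe (closure_eq H)

lemma mapsTo_sup (hF : IsFusionSystem T F) (hf : F f X Y) {P Q R : Subgroup S}
    (hP : P ≤ X) (hQ : Q ≤ X) (hPR : Set.MapsTo f P R) (hQR : Set.MapsTo f Q R) :
    Set.MapsTo f ↑(P ⊔ Q) R := by
  let K : Subgroup S :=
    { carrier := {x | x ∈ X ∧ f x ∈ R}
      one_mem' := ⟨X.one_mem, by rw [hF.map_one hf]; exact R.one_mem⟩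
      mul_mem' := by
        rintro a b ⟨ha, hfa⟩ ⟨hb, hfb⟩
        refine ⟨X.mul_mem ha hb, ?_⟩
        rw [hF.map_mul' f X Y hf a ha b hb]
        exact R.mul_mem hfa hfb
      inv_mem' := by
        rintro a ⟨ha, hfa⟩
        exact ⟨X.inv_mem ha, by rw [hF.map_inv hf ha]; exact R.inv_mem hfa⟩ }
  have hK : P ⊔ Q ≤ K :=
    sup_le (fun p hp => ⟨hP hp, hPR hp⟩) (fun q hq => ⟨hQ hq, hQR hq⟩)
  exact fun x hx => (hK hx).2

lemma isFIso_of_image_eq (hF : IsFusionSystem T F) (hf : F f X Y) {P Q : Subgroup S}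
    (hP : P ≤ X) (hQ : Q ≤ Y) (h : f '' P = Q) : IsFIso F f P Q :=
  ⟨hF.restrict_mem f X Y P Q hf hP hQ (h ▸ Set.mapsTo_image f P), h⟩

lemma exists_inverse (hF : IsFusionSystem T F) (hf : IsFIso F f X Y) :
    ∃ g, IsFIso F g Y X ∧ (∀ x ∈ X, g (f x) = x) ∧ ∀ y ∈ Y, f (g y) = y := by
  obtain ⟨g, hg, hgf⟩ := hF.inv_mem f X Y hf.1
  rw [hf.2, closure_eq] at hg
  refine ⟨g, ⟨hg, ?_⟩, hgf, ?_⟩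
  · refine (Set.image_subset_iff.mpr (hF.mapsTo g Y X hg)).antisymm fun x hx => ?_
    exact ⟨f x, hf.2 ▸ Set.mem_image_of_mem f hx, hgf x hx⟩
  · intro y hy
    rw [← SetLike.mem_coe, ← hf.2] at hy
    obtain ⟨x, hx, rfl⟩ := hy
    rw [hgf x hx]

variable {V A B : Subgroup S}

lemma mapsTo_sup_of_fix (hF : IsFusionSystem T F) (hf : F f A B) (hVA : V ≤ A) (hXA : X ≤ A)
    (hfix : ∀ v ∈ V, f v = v) (hXY : Set.MapsTo f X Y) : Set.MapsTo f ↑(V ⊔ X) ↑(V ⊔ Y) :=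
  hF.mapsTo_sup hf hVA hXA (fun v hv => by rw [hfix v hv]; exact mem_sup_left hv)
    fun x hx => mem_sup_right (hXY hx)

lemma image_sup_of_fix (hF : IsFusionSystem T F) (hf : F f A B) (hVA : V ≤ A) (hXA : X ≤ A)
    (hfix : ∀ v ∈ V, f v = v) (hXY : f '' X = Y) : f '' ↑(V ⊔ X) = ↑(V ⊔ Y) := by
  have hXY' : Set.MapsTo f X Y := by rw [← hXY]; exact Set.mapsTo_image f X
  refine (hF.mapsTo_sup_of_fix hf hVA hXA hfix hXY').image_subset.antisymm ?_
  rw [← hF.coe_closure_image hf (sup_le hVA hXA), SetLike.coe_subset_coe]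
  refine sup_le (fun v hv => subset_closure ⟨v, mem_sup_left hv, hfix v hv⟩) fun y hy => ?_
  rw [← SetLike.mem_coe, ← hXY] at hy
  obtain ⟨x, hx, rfl⟩ := hy
  exact subset_closure ⟨x, mem_sup_right hx, rfl⟩

lemma mem_centralizer_of_fix (hF : IsFusionSystem T F) (hf : F f A B) (hVA : V ≤ A)
    (hfix : ∀ v ∈ V, f v = v) {d : S} (hdA : d ∈ A) (hd : d ∈ centralizer (V : Set S)) :
    f d ∈ centralizer (V : Set S) := by
  rw [mem_centralizer_iff]
  intro v hv
  calc v * f d = f v * f d := by rw [hfix v hv]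
    _ = f (v * d) := (hF.map_mul' f A B hf v (hVA hv) d hdA).symm
    _ = f (d * v) := by rw [mem_centralizer_iff.mp hd v hv]
    _ = f d * f v := hF.map_mul' f A B hf d hdA v (hVA hv)
    _ = f d * v := by rw [hfix v hv]

lemma image_inf_centralizer_of_fix (hF : IsFusionSystem T F) (hf : IsFIso F f A B)
    (hVA : V ≤ A) (hfix : ∀ v ∈ V, f v = v) :
    f '' ↑(A ⊓ centralizer (V : Set S)) = ↑(B ⊓ centralizer (V : Set S)) := by
  obtain ⟨g, hg, hgf, hfg⟩ := hF.exists_inverse hf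
  have hVB : V ≤ B := fun v hv => hfix v hv ▸ hF.mapsTo f A B hf.1 (hVA hv)
  have hgfix : ∀ v ∈ V, g v = v := fun v hv => by
    conv_lhs => rw [← hfix v hv]
    exact hgf v (hVA hv)
  refine Set.Subset.antisymm ?_ fun y ⟨hyB, hyD⟩ => ?_
  · rintro _ ⟨x, ⟨hxA, hxD⟩, rfl⟩
    exact ⟨hF.mapsTo f A B hf.1 hxA, hF.mem_centralizer_of_fix hf.1 hVA hfix hxA hxD⟩
  · exact ⟨g y, ⟨hF.mapsTo g B A hg.1 hyB, hF.mem_centralizer_of_fix hg.1 hVB hgfix hyB hyD⟩,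
      hfg y hyB⟩

end IsFusionSystem

section

variable {F : HomPred S} {f : S → S} {V X Y : Subgroup S}

def CExt (F : HomPred S) (V : Subgroup S) : HomPred S :=
  fun f X Y => X ≤ centralizer (V : Set S) ∧ Y ≤ centralizer (V : Set S) ∧ F f X Y ∧
    ∃ g, F g (V ⊔ X) (V ⊔ Y) ∧ Set.EqOn g f X ∧ ∀ v ∈ V, g v = v

lemma conj_eq_self_of_mem_centralizer {g v : S} (hg : g ∈ centralizer (V : Set S))
    (hv : v ∈ V) : g⁻¹ * v * g = v := by
  rw [mul_assoc, mem_centralizer_iff.mp hg v hv, inv_mul_cancel_left]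

lemma CExt.conj_mem (hF : IsFusionSystem ⊤ F) {g : S} (hg : g ∈ centralizer (V : Set S))
    (hX : X ≤ centralizer (V : Set S)) (hY : Y ≤ centralizer (V : Set S))
    (hXY : ∀ x ∈ X, g⁻¹ * x * g ∈ Y) : CExt F V (fun x => g⁻¹ * x * g) X Y := by
  have hconj := hF.conj_mem g (mem_top g)
  have hfix : ∀ v ∈ V, g⁻¹ * v * g = v := fun v hv => conj_eq_self_of_mem_centralizer hg hv
  have hmaps := hF.mapsTo_sup_of_fix (hconj ⊤ ⊤ le_top le_top fun x _ => mem_top _) le_top le_top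
    hfix (Y := Y) hXY
  exact ⟨hX, hY, hconj X Y le_top le_top hXY, _, hconj _ _ le_top le_top hmaps,
    fun _ _ => rfl, hfix⟩

lemma CExt.inv_mem (hF : IsFusionSystem ⊤ F) (hf : CExt F V f X Y) :
    ∃ h, CExt F V h (closure (f '' X)) X ∧ ∀ x ∈ X, h (f x) = x := by
  obtain ⟨hX, hY, hf, g, hg, hgf, hfix⟩ := hf
  set Y' := closure (f '' X)
  have hY' : (Y' : Set S) = f '' X := hF.coe_closure_image hf le_rfl
  have hgX : g '' X = Y' := by rw [hgf.image_eq, hY']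
  have hY'Y : Y' ≤ Y := (closure_le Y).mpr (Set.image_subset_iff.mpr (hF.mapsTo f X Y hf))
  have hgiso : IsFIso F g (V ⊔ X) (V ⊔ Y') :=
    hF.isFIso_of_image_eq hg le_rfl (sup_le_sup_left hY'Y V)
      (hF.image_sup_of_fix hg le_sup_left le_sup_right hfix hgX)
  obtain ⟨h, hh, hhg, -⟩ := hF.exists_inverse hgiso
  have hhf : ∀ x ∈ X, h (f x) = x := fun x hx => hgf hx ▸ hhg x (mem_sup_right hx)
  have hhfix : ∀ v ∈ V, h v = v := fun v hv => by
    conv_lhs => rw [← hfix v hv]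
    exact hhg v (mem_sup_left hv)
  have hmaps : Set.MapsTo h Y' X := by
    rw [hY']
    rintro _ ⟨x, hx, rfl⟩
    rw [hhf x hx]
    exact hx
  exact ⟨h, ⟨hY'Y.trans hY, hX, hF.restrict_mem h _ _ Y' X hh.1 le_sup_right le_sup_right hmaps,
    h, hh.1, fun _ _ => rfl, hhfix⟩, hhf⟩

lemma CExt.restrict_mem (hF : IsFusionSystem ⊤ F) (hf : CExt F V f X Y) {X₀ Y₀ : Subgroup S}
    (hX₀ : X₀ ≤ X) (hY₀ : Y₀ ≤ Y) (hmaps : Set.MapsTo f X₀ Y₀) : CExt F V f X₀ Y₀ := by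
  obtain ⟨hX, hY, hf, g, hg, hgf, hfix⟩ := hf
  have hgmaps : Set.MapsTo g ↑(V ⊔ X₀) ↑(V ⊔ Y₀) :=
    hF.mapsTo_sup_of_fix hg le_sup_left (hX₀.trans le_sup_right) hfix
      fun x hx => hgf (hX₀ hx) ▸ hmaps hx
  exact ⟨hX₀.trans hX, hY₀.trans hY, hF.restrict_mem f X Y X₀ Y₀ hf hX₀ hY₀ hmaps, g,
    hF.restrict_mem g _ _ _ _ hg (sup_le_sup_left hX₀ V) (sup_le_sup_left hY₀ V) hgmaps,
    fun x hx => hgf (hX₀ hx), hfix⟩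

lemma isFusionSystem_CExt (hF : IsFusionSystem ⊤ F) (V : Subgroup S) :
    IsFusionSystem (centralizer (V : Set S)) (CExt F V) where
  le_base _ _ _ hf := ⟨hf.1, hf.2.1⟩
  mapsTo f X Y hf := hF.mapsTo f X Y hf.2.2.1
  injOn f X Y hf := hF.injOn f X Y hf.2.2.1
  map_mul' f X Y hf := hF.map_mul' f X Y hf.2.2.1
  of_eqOn := by
    rintro f f' X Y ⟨hX, hY, hf, g, hg, hgf, hfix⟩ hf'
    exact ⟨hX, hY, hF.of_eqOn f f' X Y hf hf', g, hg, hgf.trans hf'.symm, hfix⟩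
  conj_mem _ hg _ _ hX hY hXY := CExt.conj_mem hF hg hX hY hXY
  comp_mem := by
    rintro f f' X Y Z ⟨hX, -, hf, g, hg, hgf, hfix⟩ ⟨-, hZ, hf', g', hg', hgf', hfix'⟩
    refine ⟨hX, hZ, hF.comp_mem f f' X Y Z hf hf', g' ∘ g, hF.comp_mem g g' _ _ _ hg hg',
      fun x hx => ?_, fun v hv => ?_⟩
    · simp only [Function.comp_apply, hgf hx, hgf' (hF.mapsTo f X Y hf hx)]
    · simp only [Function.comp_apply, hfix v hv, hfix' v hv]
  restrict_mem _ _ _ _ _ hf hX₀ hY₀ hmaps := hf.restrict_mem hF hX₀ hY₀ hmaps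
  corestrict_mem f X Y hf :=
    hf.restrict_mem hF le_rfl
      ((closure_le Y).mpr (Set.image_subset_iff.mpr (hF.mapsTo f X Y hf.2.2.1)))
      fun x hx => subset_closure (Set.mem_image_of_mem f hx)
  inv_mem _ _ _ hf := hf.inv_mem hF

lemma CFus_le_CExt (hF : IsFusionSystem ⊤ F) (hf : CFus F V f X Y) : CExt F V f X Y :=
  hf (CExt F V) (isFusionSystem_CExt hF V) (fun _ _ _ hg => hg.2.2.1)
    fun _ _ _ ⟨hX, hY, hiso, g, hg, hgf, hfix⟩ => ⟨hX, hY, hiso.1, g,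
      by rw [sup_comm V, sup_comm V]; exact hg.1, hgf, hfix⟩

namespace IsStratification

variable {Ω : Set (Subgroup S)} {star : Subgroup S → Subgroup S}

lemma self_le_star (hΩ : IsStratification ⊤ F Ω star) (X : Subgroup S) : X ≤ star X :=
  hΩ.le_star X le_top

lemma star_le_star (hΩ : IsStratification ⊤ F Ω star) {X Y : Subgroup S} (h : X ≤ Y) :
    star X ≤ star Y :=
  hΩ.star_mono X Y le_top le_top h

lemma top_mem (hΩ : IsStratification ⊤ F Ω star) : ⊤ ∈ Ω :=
  top_unique (hΩ.self_le_star ⊤) ▸ hΩ.star_mem ⊤ le_top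

end IsStratification

-- `dimOmega Ω` is by definition `sSup {n | HasChainOfLength Ω n}`.
def HasChainOfLength (Ω : Set (Subgroup S)) (n : ℕ) : Prop :=
  ∃ c : Fin (n + 1) → Subgroup S, StrictMono c ∧ ∀ i, c i ∈ Ω

section Chains

variable {Ω : Set (Subgroup S)} {n : ℕ}

lemma le_dimOmega (hbdd : ∃ N, ∀ m, HasChainOfLength Ω m → m ≤ N) (h : HasChainOfLength Ω n) :
    n ≤ dimOmega Ω :=
  le_csSup (let ⟨N, hN⟩ := hbdd; ⟨N, fun m hm => hN m hm⟩) h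

lemma hasChainOfLength_dimOmega (hbdd : ∃ N, ∀ m, HasChainOfLength Ω m → m ≤ N)
    (hne : Ω.Nonempty) : HasChainOfLength Ω (dimOmega Ω) :=
  let ⟨A, hA⟩ := hne
  let ⟨N, hN⟩ := hbdd
  Nat.sSup_mem (s := {m | HasChainOfLength Ω m})
    ⟨0, fun _ => A, Fin.strictMono_iff_lt_succ.2 finZeroElim, fun _ => hA⟩ ⟨N, fun m hm => hN m hm⟩

variable {c : Fin (n + 1) → Subgroup S} {A : Subgroup S}

lemma eq_head_of_dimOmega_le (hbdd : ∃ N, ∀ m, HasChainOfLength Ω m → m ≤ N)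
    (hc : StrictMono c) (hcΩ : ∀ i, c i ∈ Ω) (hdim : dimOmega Ω ≤ n) (hA : A ∈ Ω)
    (hAc : A ≤ c 0) : A = c 0 := by
  refine hAc.eq_of_not_lt fun hlt => ?_
  have := le_dimOmega hbdd ⟨Matrix.vecCons A c, hc.vecCons hlt, Fin.cases hA hcΩ⟩
  omega

lemma eq_last_of_dimOmega_le (hbdd : ∃ N, ∀ m, HasChainOfLength Ω m → m ≤ N)
    (hc : StrictMono c) (hcΩ : ∀ i, c i ∈ Ω) (hdim : dimOmega Ω ≤ n) (hA : A ∈ Ω)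
    (hcA : c (Fin.last n) ≤ A) : c (Fin.last n) = A := by
  refine hcA.eq_of_not_lt fun hlt => ?_
  have hsnoc : StrictMono (Fin.snoc (α := fun _ => Subgroup S) c A) := by
    refine Fin.strictMono_iff_lt_succ.2 fun i => ?_
    cases i using Fin.lastCases with
    | last => simpa using hlt
    | cast j =>
      rw [Fin.succ_castSucc, Fin.snoc_castSucc, Fin.snoc_castSucc]
      exact hc Fin.castSucc_lt_succ
  have := le_dimOmega hbdd ⟨_, hsnoc, Fin.lastCases (by simpa using hA) (by simpa using hcΩ)⟩
  omega

end Chains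

section Centralizer

variable {Ω : Set (Subgroup S)} {star : Subgroup S → Subgroup S} {A : Subgroup S}

lemma le_circStar (hΩ : IsStratification ⊤ F Ω star) (hX : X ≤ centralizer (V : Set S)) :
    X ≤ circStar star V X :=
  le_inf (le_sup_right.trans (hΩ.self_le_star _)) hX

lemma star_sup_circStar (hΩ : IsStratification ⊤ F Ω star) (hX : X ≤ centralizer (V : Set S)) :
    star (V ⊔ circStar star V X) = star (V ⊔ X) := by
  refine le_antisymm ?_ (hΩ.star_le_star (sup_le_sup_left (le_circStar hΩ hX) V))
  calc star (V ⊔ circStar star V X) ≤ star (star (V ⊔ X)) :=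
        hΩ.star_le_star (sup_le (le_sup_left.trans (hΩ.self_le_star _)) inf_le_left)
    _ = star (V ⊔ X) := hΩ.star_fix _ (hΩ.star_mem _ le_top)

lemma circStar_eq_self (hΩ : IsStratification ⊤ F Ω star) (hA : A ∈ circOmega star V) :
    circStar star V A = A := by
  obtain ⟨X, hX, rfl⟩ := hA
  exact congrArg (· ⊓ centralizer (V : Set S)) (star_sup_circStar hΩ hX)

lemma injOn_star_sup (hΩ : IsStratification ⊤ F Ω star) :
    Set.InjOn (fun A => star (V ⊔ A)) (circOmega star V) := fun A hA B hB h => by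
  rw [← circStar_eq_self hΩ hA, ← circStar_eq_self hΩ hB]
  exact congrArg (· ⊓ centralizer (V : Set S)) h

lemma strictMono_star_sup {ι : Type*} [Preorder ι] (hΩ : IsStratification ⊤ F Ω star)
    {c : ι → Subgroup S} (hc : StrictMono c) (hcV : ∀ i, c i ∈ circOmega star V) :
    StrictMono fun i => star (V ⊔ c i) := fun i j hij =>
  (hΩ.star_le_star (sup_le_sup_left (hc hij).le V)).lt_of_ne fun h =>
    (hc hij).ne (injOn_star_sup hΩ (hcV i) (hcV j) h)

lemma finDim_circOmega (hΩ : IsStratification ⊤ F Ω star) :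
    ∃ N, ∀ n, HasChainOfLength (circOmega star V) n → n ≤ N :=
  let ⟨N, hN⟩ := hΩ.finDim
  ⟨N, fun n ⟨_, hc, hcV⟩ =>
    hN n ⟨_, strictMono_star_sup hΩ hc hcV, fun _ => hΩ.star_mem _ le_top⟩⟩

lemma exists_isFIso_star_sup (hF : IsFusionSystem ⊤ F) (hΩ : IsStratification ⊤ F Ω star)
    (hf : IsFIso (CFus F V) f X Y) :
    ∃ g, IsFIso F g (star (V ⊔ X)) (star (V ⊔ Y)) ∧ Set.EqOn g f X ∧ ∀ v ∈ V, g v = v := by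
  obtain ⟨-, -, -, g, hg, hgf, hfix⟩ := CFus_le_CExt hF hf.1
  have himg : g '' ↑(V ⊔ X) = ↑(V ⊔ Y) :=
    hF.image_sup_of_fix hg le_sup_left le_sup_right hfix (hgf.image_eq.trans hf.2)
  obtain ⟨G, hG, hGg⟩ := hΩ.extend_star g _ _ ⟨hg, himg⟩
  exact ⟨G, hG, fun x hx => (hGg (mem_sup_right hx)).trans (hgf hx),
    fun v hv => (hGg (mem_sup_left hv)).trans (hfix v hv)⟩

lemma image_circStar_eq (hF : IsFusionSystem ⊤ F) (hΩ : IsStratification ⊤ F Ω star)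
    {g : S → S} (hg : IsFIso F g (star (V ⊔ X)) (star (V ⊔ Y))) (hfix : ∀ v ∈ V, g v = v) :
    g '' circStar star V X = circStar star V Y :=
  hF.image_inf_centralizer_of_fix hg (le_sup_left.trans (hΩ.self_le_star _)) hfix

lemma mem_circOmega_of_isFIso (hF : IsFusionSystem ⊤ F) (hΩ : IsStratification ⊤ F Ω star)
    (hA : A ∈ circOmega star V) (hf : IsFIso (CFus F V) f A Y) : Y ∈ circOmega star V := by
  obtain ⟨g, hg, hgf, hfix⟩ := exists_isFIso_star_sup hF hΩ hf
  have himg := image_circStar_eq hF hΩ hg hfix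
  rw [circStar_eq_self hΩ hA, hgf.image_eq, hf.2] at himg
  exact ⟨Y, (CFus_le_CExt hF hf.1).2.1, SetLike.coe_injective himg⟩

lemma exists_isFIso_circStar (hF : IsFusionSystem ⊤ F) (hΩ : IsStratification ⊤ F Ω star)
    (hf : IsFIso (CFus F V) f X Y) :
    ∃ g, IsFIso (CFus F V) g (circStar star V X) (circStar star V Y) ∧ Set.EqOn g f X := by
  obtain ⟨g, hg, hgf, hfix⟩ := exists_isFIso_star_sup hF hΩ hf
  have hVX : V ≤ star (V ⊔ X) := le_sup_left.trans (hΩ.self_le_star _)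
  have hVY : V ≤ star (V ⊔ Y) := le_sup_left.trans (hΩ.self_le_star _)
  have himg := image_circStar_eq hF hΩ hg hfix
  have himg' : g '' ↑(circStar star V X ⊔ V) = ↑(circStar star V Y ⊔ V) := by
    rw [sup_comm _ V, sup_comm _ V]
    exact hF.image_sup_of_fix hg.1 hVX inf_le_left hfix himg
  have hψ : CPsi F V g (circStar star V X) (circStar star V Y) :=
    ⟨inf_le_right, inf_le_right, hF.isFIso_of_image_eq hg.1 inf_le_left inf_le_left himg, g,
      hF.isFIso_of_image_eq hg.1 (sup_le inf_le_left hVX) (sup_le inf_le_left hVY) himg',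
      fun _ _ => rfl, hfix⟩
  exact ⟨g, ⟨fun _ _ _ hE => hE _ _ _ hψ, himg⟩, hgf⟩

theorem isStratification_circStar (hF : IsFusionSystem ⊤ F) (hΩ : IsStratification ⊤ F Ω star)
    (V : Subgroup S) :
    IsStratification (centralizer (V : Set S)) (CFus F V) (circOmega star V) (circStar star V) where
  omega_le := by
    rintro _ ⟨X, -, rfl⟩
    exact inf_le_right
  star_mem X hX := ⟨X, hX, rfl⟩
  star_fix _ hA := circStar_eq_self hΩ hA
  star_mono _ _ _ _ h := inf_le_inf_right _ (hΩ.star_le_star (sup_le_sup_left h V))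
  finDim := finDim_circOmega hΩ
  conj_invariant _ hA _ _ hf := mem_circOmega_of_isFIso hF hΩ hA hf
  le_star _ hX := le_circStar hΩ hX
  extend_star _ _ _ hf := exists_isFIso_circStar hF hΩ hf

theorem le_star_bot_and_star_sup_centralizer_eq_top (hΩ : IsStratification ⊤ F Ω star)
    (hdim : dimOmega (circOmega star V) = dimOmega Ω) :
    V ≤ star ⊥ ∧ star (V ⊔ centralizer (V : Set S)) = ⊤ := by
  obtain ⟨c, hc, hcV⟩ :=
    hasChainOfLength_dimOmega (finDim_circOmega hΩ) ⟨_, ⊥, bot_le, rfl⟩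
  have hc' := strictMono_star_sup hΩ hc hcV
  have hc'Ω : ∀ i, star (V ⊔ c i) ∈ Ω := fun _ => hΩ.star_mem _ le_top
  have hbot := eq_head_of_dimOmega_le hΩ.finDim hc' hc'Ω hdim.ge (hΩ.star_mem ⊥ le_top)
    (hΩ.star_le_star bot_le)
  have htop := eq_last_of_dimOmega_le hΩ.finDim hc' hc'Ω hdim.ge hΩ.top_mem le_top
  refine ⟨hbot ▸ le_sup_left.trans (hΩ.self_le_star _), top_unique ?_⟩
  rw [← htop]
  obtain ⟨X, -, hX⟩ := hcV (Fin.last _)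
  exact hΩ.star_le_star (sup_le_sup_left (hX ▸ inf_le_right) V)

end Centralizer

end

/-- Lemma 2.6, centralizer part. `(C_Ω(V), °)` is a stratification on
`C_F(V)`; the map `A ↦ (VA)⋆` is an injective homomorphism of posets `C_Ω(V) → Ω`; and if
`dim(C_Ω(V)) = dim(Ω)` then `Z(V) ≤ 1⋆` and `(VD)⋆ = S`, where `D = C_S(V)`. -/
theorem stratification_on_centralizer
    {S : Type*} [Group S] (F : HomPred S)
    (Ω : Set (Subgroup S)) (star : Subgroup S → Subgroup S)
    (hF : IsFusionSystem ⊤ F) (hΩ : IsStratification ⊤ F Ω star)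
    (V : Subgroup S) :
    IsStratification (Subgroup.centralizer (V : Set S)) (CFus F V)
        (circOmega star V) (circStar star V) ∧
    ((∀ A ∈ circOmega star V, star (V ⊔ A) ∈ Ω) ∧
      (∀ A ∈ circOmega star V, ∀ B ∈ circOmega star V, A ≤ B →
        star (V ⊔ A) ≤ star (V ⊔ B)) ∧
      Set.InjOn (fun A => star (V ⊔ A)) (circOmega star V)) ∧
    (dimOmega (circOmega star V) = dimOmega Ω →
      Subgroup.centralizer (V : Set S) ⊓ V ≤ star ⊥ ∧
        star (V ⊔ Subgroup.centralizer (V : Set S)) = ⊤) := by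
  refine ⟨isStratification_circStar hF hΩ V,
    ⟨fun _ _ => hΩ.star_mem _ le_top, fun _ _ _ _ h => hΩ.star_le_star (sup_le_sup_left h V),
      injOn_star_sup hΩ⟩, fun hdim => ?_⟩
  obtain ⟨hV, htop⟩ := le_star_bot_and_star_sup_centralizer_eq_top hΩ hdim
  exact ⟨inf_le_right.trans hV, htop⟩
end

section
/- Let (F,Ω,⋆) be a stratified fusion system on a group S, let Γ be an F-closed set of subgroups of S such that F is Γ-inductive, and let Y ∈ Γ. Then: (a) Y is normalizer-inductive in F if and only if Y is fully normalized in (F,Ω,⋆); (b) Y is centralizer-inductive in F if and only if Y is fully centralized in (F,Ω,⋆); (c) if Y is fully normalized in (F,Ω,⋆), then Y is fully centralized in (F,Ω,⋆). -/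
variable {S : Type*} [Group S]

namespace IsFusionSystem

variable {T : Subgroup S} {F : HomPred S} {f : S → S} {P Q X Y : Subgroup S}

def toMonoidHom (hF : IsFusionSystem T F) (hf : F f X Y) : X →* S where
  toFun x := f x
  map_one' := by
    have h := hF.map_mul' f X Y hf 1 (one_mem X) 1 (one_mem X)
    rwa [one_mul, left_eq_mul] at h
  map_mul' x y := hF.map_mul' f X Y hf x x.2 y y.2

@[simp]
lemma toMonoidHom_apply (hF : IsFusionSystem T F) (hf : F f X Y) (x : X) :
    hF.toMonoidHom hf x = f x :=
  rfl

lemma coe_map_subgroupOf_toMonoidHom (hF : IsFusionSystem T F) (hf : F f X Y)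
    {K : Subgroup S} (hKX : K ≤ X) :
    ((K.subgroupOf X).map (hF.toMonoidHom hf) : Set S) = f '' K := by
  ext y
  simp only [Subgroup.coe_map, Set.mem_image, SetLike.mem_coe, Subgroup.mem_subgroupOf,
    toMonoidHom_apply, Subtype.exists, exists_and_right]
  exact ⟨fun ⟨x, ⟨_, hx⟩, hxy⟩ => ⟨x, hx, hxy⟩, fun ⟨x, hx, hxy⟩ => ⟨x, ⟨hKX hx, hx⟩, hxy⟩⟩

lemma isFIso_range (hF : IsFusionSystem T F) (hf : F f X Y) :
    IsFIso F f X (hF.toMonoidHom hf).range := by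
  have himage : ((hF.toMonoidHom hf).range : Set S) = f '' X := by
    simpa [Subgroup.subgroupOf_self] using coe_map_subgroupOf_toMonoidHom hF hf le_rfl
  refine ⟨?_, himage.symm⟩
  have h := hF.corestrict_mem f X Y hf
  rwa [← himage, Subgroup.closure_eq] at h

lemma exists_isFIso_image_s5 (hF : IsFusionSystem T F) (hf : F f X Y) :
    ∃ K, IsFIso F f X K ∧ K ≤ Y := by
  refine ⟨_, hF.isFIso_range hf, ?_⟩
  rintro _ ⟨x, rfl⟩
  exact hF.mapsTo f X Y hf x.2

lemma exists_isFIso_leftInvOn (hF : IsFusionSystem T F) (hf : IsFIso F f X Y) :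
    ∃ g, IsFIso F g Y X ∧ Set.LeftInvOn g f X := by
  obtain ⟨g, hg, hgf⟩ := hF.inv_mem f X Y hf.1
  rw [hf.2, Subgroup.closure_eq] at hg
  refine ⟨g, ⟨hg, ?_⟩, hgf⟩
  rw [← hf.2]
  exact Set.LeftInvOn.image_image hgf

lemma le_of_mem_fConj (hF : IsFusionSystem T F) (h : Y ∈ FConj F X) : X ≤ T ∧ Y ≤ T :=
  let ⟨f, hf⟩ := h
  hF.le_base f X Y hf.1

lemma mem_fConj_symm (hF : IsFusionSystem T F) (h : Y ∈ FConj F X) : X ∈ FConj F Y := by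
  obtain ⟨f, hf⟩ := h
  obtain ⟨g, hg, -⟩ := hF.exists_isFIso_leftInvOn hf
  exact ⟨g, hg⟩

lemma mem_fConj_trans (hF : IsFusionSystem T F) {Z : Subgroup S} (hXY : Y ∈ FConj F X)
    (hYZ : Z ∈ FConj F Y) : Z ∈ FConj F X := by
  obtain ⟨f, hf, hfX⟩ := hXY
  obtain ⟨g, hg, hgY⟩ := hYZ
  exact ⟨g ∘ f, hF.comp_mem f g X Y Z hf hg, by rw [Set.image_comp, hfX, hgY]⟩

lemma restrict (hF : IsFusionSystem T F) (hf : F f X Y) {K : Subgroup S} (hKX : K ≤ X) :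
    F f K Y :=
  hF.restrict_mem f X Y K Y hf hKX le_rfl fun _ hk => hF.mapsTo f X Y hf (hKX hk)

lemma mapsTo_normalizer (hF : IsFusionSystem T F) (hf : F f X Y) {K : Subgroup S}
    (hKX : K ≤ X) :
    Set.MapsTo f (Subgroup.normalizer (K : Set S) ⊓ X : Subgroup S)
      (Subgroup.normalizer (f '' K)) := by
  rintro n ⟨hn, hnX⟩
  have hn' : (⟨n, hnX⟩ : X) ∈ Subgroup.normalizer (K.subgroupOf X : Set X) := by
    rw [← Subgroup.subgroupOf_normalizer_eq hKX, Subgroup.mem_subgroupOf]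
    exact hn
  have := Subgroup.le_normalizer_map (hF.toMonoidHom hf) ⟨_, hn', rfl⟩
  rwa [hF.coe_map_subgroupOf_toMonoidHom hf hKX] at this

lemma mapsTo_centralizer (hF : IsFusionSystem T F) (hf : F f X Y) {K : Subgroup S}
    (hKX : K ≤ X) :
    Set.MapsTo f (Subgroup.centralizer (K : Set S) ⊓ X : Subgroup S)
      (Subgroup.centralizer (f '' K)) := by
  rintro c ⟨hc, hcX⟩ _ ⟨k, hk, rfl⟩
  rw [← hF.map_mul' f X Y hf k (hKX hk) c hcX, hc k hk, hF.map_mul' f X Y hf c hcX k (hKX hk)]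

lemma mapsTo_sup_s5 (hF : IsFusionSystem T F) (hf : F f X Y) {A B C : Subgroup S}
    (hAX : A ≤ X) (hBX : B ≤ X) (hAC : Set.MapsTo f A C) (hBC : Set.MapsTo f B C) :
    Set.MapsTo f (A ⊔ B : Subgroup S) C := by
  let K := (C.comap (hF.toMonoidHom hf)).map X.subtype
  have hK : ∀ {x}, x ∈ X → f x ∈ C → x ∈ K := fun hx hfx => ⟨⟨_, hx⟩, hfx, rfl⟩
  have hABK : A ⊔ B ≤ K :=
    sup_le (fun a ha => hK (hAX ha) (hAC ha)) (fun b hb => hK (hBX hb) (hBC hb))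
  intro x hx
  obtain ⟨_, hfx, rfl⟩ := hABK hx
  exact hfx

lemma mapsTo_normalizer_inf (hF : IsFusionSystem T F) (hf : F f P Q) (hXP : X ≤ P)
    (hNP : Subgroup.normalizer (X : Set S) ⊓ T ≤ P) (hY : f '' X = Y) :
    Set.MapsTo f (Subgroup.normalizer (X : Set S) ⊓ T : Subgroup S)
      (Subgroup.normalizer (Y : Set S) ⊓ T : Subgroup S) := fun _ hn =>
  ⟨hY ▸ hF.mapsTo_normalizer hf hXP ⟨hn.1, hNP hn⟩,
    (hF.le_base f P Q hf).2 (hF.mapsTo f P Q hf (hNP hn))⟩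

lemma mapsTo_centralizer_inf_sup (hF : IsFusionSystem T F) (hf : F f P Q)
    (hP : Subgroup.centralizer (X : Set S) ⊓ T ⊔ X ≤ P) (hY : f '' X = Y) :
    Set.MapsTo f (Subgroup.centralizer (X : Set S) ⊓ T ⊔ X : Subgroup S)
      (Subgroup.centralizer (Y : Set S) ⊓ T ⊔ Y : Subgroup S) := by
  have hCP : Subgroup.centralizer (X : Set S) ⊓ T ≤ P := le_sup_left.trans hP
  have hXP : X ≤ P := le_sup_right.trans hP
  refine hF.mapsTo_sup_s5 hf hCP hXP (fun c hc => ?_) (fun x hx => ?_)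
  · exact le_sup_left (a := Subgroup.centralizer (Y : Set S) ⊓ T)
      ⟨hY ▸ hF.mapsTo_centralizer hf hXP ⟨hc.1, hCP hc⟩,
        (hF.le_base f P Q hf).2 (hF.mapsTo f P Q hf (hCP hc))⟩
  · exact le_sup_right (b := Y)
      (show f x ∈ (Y : Set S) from hY ▸ Set.mem_image_of_mem f hx)

end IsFusionSystem

namespace IsStratification

variable {T : Subgroup S} {F : HomPred S} {Ω : Set (Subgroup S)}
  {star : Subgroup S → Subgroup S} {A B : Subgroup S}

lemma bddAbove_chainLengths (hΩ : IsStratification T F Ω star) (A : Subgroup S) :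
    BddAbove {n | ∃ c : Fin (n + 1) → Subgroup S,
      StrictMono c ∧ (∀ i, c i ∈ Ω) ∧ c (Fin.last n) = A} := by
  obtain ⟨N, hN⟩ := hΩ.finDim
  exact ⟨N, fun n ⟨c, hc, hcΩ, _⟩ => hN n ⟨c, hc, hcΩ⟩⟩

lemma le_dimEnd (hΩ : IsStratification T F Ω star) {n : ℕ} {c : Fin (n + 1) → Subgroup S}
    (hc : StrictMono c) (hcΩ : ∀ i, c i ∈ Ω) : n ≤ dimEnd Ω (c (Fin.last n)) :=
  le_csSup (hΩ.bddAbove_chainLengths _) ⟨c, hc, hcΩ, rfl⟩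

lemma exists_chain_dimEnd (hΩ : IsStratification T F Ω star) (hA : A ∈ Ω) :
    ∃ c : Fin (dimEnd Ω A + 1) → Subgroup S,
      StrictMono c ∧ (∀ i, c i ∈ Ω) ∧ c (Fin.last _) = A := by
  refine Nat.sSup_mem ⟨0, ?_⟩ (hΩ.bddAbove_chainLengths A)
  exact ⟨fun _ => A, fun i j hij => by omega, fun _ => hA, rfl⟩

lemma dimEnd_lt_dimEnd (hΩ : IsStratification T F Ω star) (hA : A ∈ Ω) (hB : B ∈ Ω)
    (hAB : A < B) : dimEnd Ω A < dimEnd Ω B := by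
  obtain ⟨c, hc, hcΩ, hcA⟩ := hΩ.exists_chain_dimEnd hA
  have hsnoc := hΩ.le_dimEnd (Fin.strictMono_insertNth_last hc B (by rwa [hcA])) fun i => by
    cases i using Fin.lastCases with
    | last => simpa using hB
    | cast i => simpa using hcΩ i
  simpa using hsnoc

lemma eq_of_le_of_dimEnd_le (hΩ : IsStratification T F Ω star) (hA : A ∈ Ω) (hB : B ∈ Ω)
    (hAB : A ≤ B) (hdim : dimEnd Ω B ≤ dimEnd Ω A) : A = B :=
  hAB.eq_of_not_lt fun hlt => (hΩ.dimEnd_lt_dimEnd hA hB hlt).not_ge hdim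

lemma dimEnd_le_dimEnd_of_isFIso (hΩ : IsStratification T F Ω star) (hF : IsFusionSystem T F)
    {f : S → S} (hf : IsFIso F f A B) (hA : A ∈ Ω) : dimEnd Ω A ≤ dimEnd Ω B := by
  obtain ⟨c, hc, hcΩ, hcA⟩ := hΩ.exists_chain_dimEnd hA
  have hcle : ∀ i, c i ≤ A := fun i => hcA ▸ hc.monotone (Fin.le_last i)
  choose K hK using fun i => hF.exists_isFIso_image_s5 (hF.restrict hf.1 (hcle i))
  have hKmono : StrictMono K := fun i j hij => by
    rw [← SetLike.coe_ssubset_coe, ← (hK i).1.2, ← (hK j).1.2,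
      (hF.injOn f A B hf.1).image_ssubset_image_iff (hcle i) (hcle j)]
    exact hc hij
  have hKA : K (Fin.last _) = B := SetLike.coe_injective <| by
    rw [← (hK _).1.2, hcA, hf.2]
  simpa [hKA] using hΩ.le_dimEnd hKmono fun i => hΩ.conj_invariant _ (hcΩ i) f _ (hK i).1

lemma dimStar_mono (hΩ : IsStratification T F Ω star) (hB : B ≤ T) (hAB : A ≤ B) :
    dimStar Ω star A ≤ dimStar Ω star B := by
  obtain hlt | heq := (hΩ.star_mono A B (hAB.trans hB) hB hAB).lt_or_eq
  · exact (hΩ.dimEnd_lt_dimEnd (hΩ.star_mem A (hAB.trans hB)) (hΩ.star_mem B hB) hlt).le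
  · exact (congrArg (dimEnd Ω) heq).le

lemma dimStar_eq_of_isFIso (hΩ : IsStratification T F Ω star) (hF : IsFusionSystem T F)
    {f : S → S} (hf : IsFIso F f A B) : dimStar Ω star A = dimStar Ω star B := by
  obtain ⟨hAT, hBT⟩ := hF.le_base f A B hf.1
  obtain ⟨g, hg, -⟩ := hΩ.extend_star f A B hf
  obtain ⟨g', hg', -⟩ := hF.exists_isFIso_leftInvOn hg
  exact le_antisymm (hΩ.dimEnd_le_dimEnd_of_isFIso hF hg (hΩ.star_mem A hAT))
    (hΩ.dimEnd_le_dimEnd_of_isFIso hF hg' (hΩ.star_mem B hBT))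

lemma dimStar_le_of_hom (hΩ : IsStratification T F Ω star) (hF : IsFusionSystem T F)
    {f : S → S} (hf : F f A B) : dimStar Ω star A ≤ dimStar Ω star B := by
  obtain ⟨K, hK, hKB⟩ := hF.exists_isFIso_image_s5 hf
  exact (hΩ.dimStar_eq_of_isFIso hF hK).trans_le
    (hΩ.dimStar_mono (hF.le_base f A B hf).2 hKB)

lemma exists_leftInvOn_of_dimStar_le (hΩ : IsStratification T F Ω star)
    (hF : IsFusionSystem T F) {ψ : S → S} (hψ : F ψ A B)
    (hdim : dimStar Ω star B ≤ dimStar Ω star A) :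
    ∃ h, F h B (star A) ∧ Set.LeftInvOn h ψ A := by
  obtain ⟨hAT, hBT⟩ := hF.le_base ψ A B hψ
  obtain ⟨K, hK, hKB⟩ := hF.exists_isFIso_image_s5 hψ
  have hKT := hKB.trans hBT
  -- `K⋆ ≤ B⋆`, and `K ≅ A` gives them the same dimension, so they coincide.
  have hstar : star K = star B :=
    hΩ.eq_of_le_of_dimEnd_le (hΩ.star_mem K hKT) (hΩ.star_mem B hBT)
      (hΩ.star_mono K B hKT hBT hKB) (hdim.trans (hΩ.dimStar_eq_of_isFIso hF hK).le)
  obtain ⟨g, hg, hgψ⟩ := hΩ.extend_star ψ A K hK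
  obtain ⟨h, hh, hhg⟩ := hF.exists_isFIso_leftInvOn hg
  refine ⟨h, hF.restrict (hstar ▸ hh.1) (hΩ.le_star B hBT), fun a ha => ?_⟩
  rw [← hgψ ha]
  exact hhg (hΩ.le_star A hAT ha)

end IsStratification

/-- For `N X = N_T(X)`, resp. `N X = C_T(X)X`, `InductiveFor` and `FullyFor` unfold to
normalizer- (centralizer-)inductive and fully normalized (centralized). -/
def InductiveFor (F : HomPred S) (N : Subgroup S → Subgroup S) (Y : Subgroup S) : Prop :=
  ∀ X ∈ FConj F Y, ∃ φ, F φ (N X) (N Y) ∧ φ '' (X : Set S) = Y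

def FullyFor (F : HomPred S) (Ω : Set (Subgroup S)) (star : Subgroup S → Subgroup S)
    (N : Subgroup S → Subgroup S) (Y : Subgroup S) : Prop :=
  ∀ U ∈ FConj F Y, dimStar Ω star (N U) ≤ dimStar Ω star (N Y)

namespace InductiveFor

variable {T : Subgroup S} {F : HomPred S} {Ω : Set (Subgroup S)}
  {star : Subgroup S → Subgroup S} {N : Subgroup S → Subgroup S} {Y Z : Subgroup S}

lemma fullyFor (hΩ : IsStratification T F Ω star) (hF : IsFusionSystem T F)
    (hY : InductiveFor F N Y) : FullyFor F Ω star N Y := fun U hU => by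
  obtain ⟨φ, hφ, -⟩ := hY U hU
  exact hΩ.dimStar_le_of_hom hF hφ

lemma of_fullyFor (hΩ : IsStratification T F Ω star) (hF : IsFusionSystem T F)
    (hN_le : ∀ X ≤ T, X ≤ N X)
    (hN_map : ∀ f (P Q X Y : Subgroup S), F f P Q → X ≤ N X → N X ≤ P →
      f '' (X : Set S) = Y → Set.MapsTo f (N X : Set S) (N Y))
    (hZ : InductiveFor F N Z) (hZY : Z ∈ FConj F Y) (hY : FullyFor F Ω star N Y) :
    InductiveFor F N Y := by
  have hYZ : Y ∈ FConj F Z := hF.mem_fConj_symm hZY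
  obtain ⟨ψ, hψ, hψY⟩ := hZ Y hYZ
  obtain ⟨h, hh, hhψ⟩ := hΩ.exists_leftInvOn_of_dimStar_le hF hψ (hY Z hZY)
  obtain ⟨hYT, hZT⟩ := hF.le_of_mem_fConj hZY
  have hhZ : h '' (Z : Set S) = Y := by
    rw [← hψY]
    exact (hhψ.mono (hN_le Y hYT)).image_image
  have hh' : F h (N Z) (N Y) :=
    hF.restrict_mem h (N Z) (star (N Y)) (N Z) (N Y) hh le_rfl
      (hΩ.le_star _ (hF.le_base _ _ _ hψ).1) (hN_map h _ _ Z Y hh (hN_le Z hZT) le_rfl hhZ)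
  intro X hX
  obtain ⟨φ, hφ, hφX⟩ := hZ X (hF.mem_fConj_trans hYZ hX)
  exact ⟨h ∘ φ, hF.comp_mem φ h _ _ _ hφ hh', by rw [Set.image_comp, hφX, hhZ]⟩

end InductiveFor

section

variable {T : Subgroup S} {F : HomPred S} {Ω : Set (Subgroup S)}
  {star : Subgroup S → Subgroup S} {Y Z : Subgroup S}

lemma NormalizerInductive.fullyNormalizedIn (hΩ : IsStratification T F Ω star)
    (hF : IsFusionSystem T F) (hY : NormalizerInductive T F Y) :
    FullyNormalizedIn T F Ω star Y :=
  InductiveFor.fullyFor (N := fun X : Subgroup S => Subgroup.normalizer (X : Set S) ⊓ T)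
    hΩ hF hY

lemma NormalizerInductive.of_fullyNormalizedIn (hΩ : IsStratification T F Ω star)
    (hF : IsFusionSystem T F) (hZ : NormalizerInductive T F Z) (hZY : Z ∈ FConj F Y)
    (hY : FullyNormalizedIn T F Ω star Y) : NormalizerInductive T F Y :=
  InductiveFor.of_fullyFor (N := fun X : Subgroup S => Subgroup.normalizer (X : Set S) ⊓ T)
    hΩ hF
    (fun _ hXT => le_inf Subgroup.le_normalizer hXT)
    (fun _ _ _ _ _ hf hXN hNP hY => hF.mapsTo_normalizer_inf hf (hXN.trans hNP) hNP hY)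
    hZ hZY hY

lemma CentralizerInductive.fullyCentralizedIn (hΩ : IsStratification T F Ω star)
    (hF : IsFusionSystem T F) (hY : CentralizerInductive T F Y) :
    FullyCentralizedIn T F Ω star Y :=
  InductiveFor.fullyFor
    (N := fun X : Subgroup S => Subgroup.centralizer (X : Set S) ⊓ T ⊔ X) hΩ hF hY

lemma CentralizerInductive.of_fullyCentralizedIn (hΩ : IsStratification T F Ω star)
    (hF : IsFusionSystem T F) (hZ : CentralizerInductive T F Z) (hZY : Z ∈ FConj F Y)
    (hY : FullyCentralizedIn T F Ω star Y) : CentralizerInductive T F Y :=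
  InductiveFor.of_fullyFor
    (N := fun X : Subgroup S => Subgroup.centralizer (X : Set S) ⊓ T ⊔ X) hΩ hF
    (fun _ _ => le_sup_right)
    (fun _ _ _ _ _ hf _ hNP hY => hF.mapsTo_centralizer_inf_sup hf hNP hY)
    hZ hZY hY

lemma NormalizerInductive.centralizerInductive (hF : IsFusionSystem T F)
    (hY : NormalizerInductive T F Y) : CentralizerInductive T F Y := by
  have hCN : ∀ X ≤ T, Subgroup.centralizer (X : Set S) ⊓ T ⊔ X ≤
      Subgroup.normalizer (X : Set S) ⊓ T := fun X hXT =>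
    sup_le (inf_le_inf_right T (Subgroup.centralizer_le_normalizer _))
      (le_inf Subgroup.le_normalizer hXT)
  intro X hX
  obtain ⟨hYT, hXT⟩ := hF.le_of_mem_fConj hX
  obtain ⟨φ, hφ, hφX⟩ := hY X hX
  exact ⟨φ, hF.restrict_mem φ _ _ _ _ hφ (hCN X hXT) (hCN Y hYT)
    (hF.mapsTo_centralizer_inf_sup hφ (hCN X hXT) hφX), hφX⟩

end

theorem normalizerInductive_iff_fullyNormalized_general
    {S : Type*} [Group S] (F : HomPred S)
    (Ω : Set (Subgroup S)) (star : Subgroup S → Subgroup S)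
    (hF : IsFusionSystem ⊤ F) (hΩ : IsStratification ⊤ F Ω star)
    (Γ : Set (Subgroup S)) (hind : GammaInductive ⊤ F Γ)
    (Y : Subgroup S) (hY : Y ∈ Γ) :
    (NormalizerInductive ⊤ F Y ↔ FullyNormalizedIn ⊤ F Ω star Y) ∧
    (CentralizerInductive ⊤ F Y ↔ FullyCentralizedIn ⊤ F Ω star Y) ∧
    (FullyNormalizedIn ⊤ F Ω star Y → FullyCentralizedIn ⊤ F Ω star Y) := by
  obtain ⟨Z, hZY, hZ⟩ := hind Y hY
  have hN : NormalizerInductive ⊤ F Y ↔ FullyNormalizedIn ⊤ F Ω star Y :=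
    ⟨fun h => h.fullyNormalizedIn hΩ hF, hZ.of_fullyNormalizedIn hΩ hF hZY⟩
  have hC : CentralizerInductive ⊤ F Y ↔ FullyCentralizedIn ⊤ F Ω star Y :=
    ⟨fun h => h.fullyCentralizedIn hΩ hF,
      (hZ.centralizerInductive hF).of_fullyCentralizedIn hΩ hF hZY⟩
  exact ⟨hN, hC, fun hY => hC.1 ((hN.2 hY).centralizerInductive hF)⟩

/-- Lemma 2.9. For `Y ∈ Γ` with `Γ` `F`-closed and `F` `Γ`-inductive:
(a) `Y` is normalizer-inductive iff `Y` is fully normalized;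
(b) `Y` is centralizer-inductive iff `Y` is fully centralized;
(c) fully normalized implies fully centralized. -/
theorem normalizerInductive_iff_fullyNormalized
    {S : Type*} [Group S] (F : HomPred S)
    (Ω : Set (Subgroup S)) (star : Subgroup S → Subgroup S)
    (hF : IsFusionSystem ⊤ F) (hΩ : IsStratification ⊤ F Ω star)
    (Γ : Set (Subgroup S)) (hΓ : FClosed F Γ) (hind : GammaInductive ⊤ F Γ)
    (Y : Subgroup S) (hY : Y ∈ Γ) :
    (NormalizerInductive ⊤ F Y ↔ FullyNormalizedIn ⊤ F Ω star Y) ∧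
    (CentralizerInductive ⊤ F Y ↔ FullyCentralizedIn ⊤ F Ω star Y) ∧
    (FullyNormalizedIn ⊤ F Ω star Y → FullyCentralizedIn ⊤ F Ω star Y) :=
  normalizerInductive_iff_fullyNormalized_general F Ω star hF hΩ Γ hind Y hY
end
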